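/- arXiv:2501.08993 — 6 statements merged into one kernel-verified Lean document; each statement's English description precedes it below -/
import Mathlib

section
/- Let (A_i)_{i∈ℕ} and (B_j)_{j∈J} be families of abelian groups, φ : ∏_{i∈ℕ} A_i → ⊕_{j∈J} B_j a group homomorphism, and for each i a descending chain of subgroups (A_{i,k})_{k∈ℕ} of A_i and for each j a descending chain (B_{j,k})_{k∈ℕ} of B_j, such that φ(∏_i A_{i,k}) ⊆ ⊕_j B_{j,k} for all k. Then there exist a finite subset J' ⊆ J and natural numbers m₀, n₀ such that φ(∏_{i ≥ m₀} A_{i,n₀}) ⊆ (⊕_{j∈J'} B_j) + ⋂_{n∈ℕ} (⊕_{j∈J} B_{j,n}). -/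
open DirectSum

/-- **Countable Chase Lemma.** Given families of abelian groups `(A i)_{i ∈ ℕ}`, `(B j)_{j ∈ J}`,
a homomorphism `φ : ∏ A i →+ ⨁ B j`, descending chains of subgroups `Asub i k ≤ A i`,
`Bsub j k ≤ B j` with `φ (∏ᵢ Asub i k) ⊆ ⨁ⱼ Bsub j k` for all `k`, there are a finite `J' ⊆ J`
and `m₀ n₀ : ℕ` such that `φ (∏_{i ≥ m₀} Asub i n₀) ⊆ (⨁_{j ∈ J'} B j) + ⋂ₙ (⨁ⱼ Bsub j n)`. -/
theorem countable_chase_lemma {J : Type*} (A : ℕ → Type*) (B : J → Type*)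
    [∀ i, AddCommGroup (A i)] [∀ j, AddCommGroup (B j)]
    (φ : (∀ i, A i) →+ DirectSum J B)
    (Asub : ∀ i, ℕ → AddSubgroup (A i)) (Bsub : ∀ j, ℕ → AddSubgroup (B j))
    (hA : ∀ i, Antitone (Asub i)) (hB : ∀ j, Antitone (Bsub j))
    (hφ : ∀ (k : ℕ) (x : ∀ i, A i), (∀ i, x i ∈ Asub i k) → ∀ j, φ x j ∈ Bsub j k) :
    ∃ (J' : Finset J) (m₀ n₀ : ℕ),
      ∀ x : ∀ i, A i, (∀ i, m₀ ≤ i → x i ∈ Asub i n₀) → (∀ i, i < m₀ → x i = 0) →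
        ∃ y z : DirectSum J B, φ x = y + z ∧ (∀ j ∉ J', y j = 0) ∧
          ∀ (n : ℕ) (j : J), z j ∈ Bsub j n := by
  classical
  suffices hs : ∃ (J' : Finset J) (m₀ n₀ : ℕ),
      ∀ x : ∀ i, A i, (∀ i, m₀ ≤ i → x i ∈ Asub i n₀) → (∀ i, i < m₀ → x i = 0) →
        ∀ j ∉ J', ∀ n, φ x j ∈ Bsub j n by
    obtain ⟨J', m₀, n₀, h⟩ := hs
    refine ⟨J', m₀, n₀, fun x h1 h2 => ?_⟩
    set y : DirectSum J B := (φ x).filter (· ∈ J') with hy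
    refine ⟨y, φ x - y, by abel, ?_, ?_⟩
    · intro j hj
      simp [hy, DFinsupp.filter_apply, hj]
    · intro n j
      rw [DFinsupp.sub_apply, hy, DFinsupp.filter_apply]
      by_cases hj : j ∈ J'
      · simpa [hj] using zero_mem (Bsub j n)
      · simpa [hj] using h x h1 h2 j hj n
  by_contra hcon
  push_neg at hcon
  choose x hx1 hx2 jf hjf nf hnf using hcon
  -- the recursive state: (accumulated finite set, current n)
  let state : ℕ → Finset J × ℕ := fun k => Nat.rec ((∅ : Finset J), 0) (fun k s =>
    (s.1 ∪ (φ (x s.1 k s.2)).support ∪ {jf s.1 k s.2},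
      max (s.2 + 1) (nf s.1 k s.2))) k
  set Jk : ℕ → Finset J := fun k => (state k).1 with hJk
  set nk : ℕ → ℕ := fun k => (state k).2 with hnk
  set xk : ℕ → ∀ i, A i := fun k => x (Jk k) k (nk k) with hxk
  set jk : ℕ → J := fun k => jf (Jk k) k (nk k) with hjk
  set n'k : ℕ → ℕ := fun k => nf (Jk k) k (nk k) with hn'k
  have hstate : ∀ k, state (k + 1) =
      (Jk k ∪ (φ (xk k)).support ∪ {jk k}, max (nk k + 1) (n'k k)) := fun k => rfl
  have hJsucc : ∀ k, Jk (k+1) = Jk k ∪ (φ (xk k)).support ∪ {jk k} := fun k =>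
    congrArg Prod.fst (hstate k)
  have hnsucc : ∀ k, nk (k+1) = max (nk k + 1) (n'k k) := fun k =>
    congrArg Prod.snd (hstate k)
  have hnmono : Monotone nk := monotone_nat_of_le_succ fun k => by
    rw [hnsucc]; omega
  have hJmono : Monotone Jk := monotone_nat_of_le_succ fun k => by
    rw [hJsucc]; intro a ha; simp [ha]
  have hsupp : ∀ k, (φ (xk k)).support ⊆ Jk (k+1) := fun k => by
    rw [hJsucc]; intro a ha; simp [ha]
  have hjkin : ∀ k, jk k ∈ Jk (k+1) := fun k => by rw [hJsucc]; simp
  have hjknot : ∀ k, jk k ∉ Jk k := fun k => hjf _ _ _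
  have hn' : ∀ k, n'k k ≤ nk (k+1) := fun k => by rw [hnsucc]; omega
  have hx1' : ∀ k i, k ≤ i → xk k i ∈ Asub i (nk k) := fun k i h => hx1 _ _ _ i h
  have hx2' : ∀ k i, i < k → xk k i = 0 := fun k i h => hx2 _ _ _ i h
  have hbad : ∀ k, φ (xk k) (jk k) ∉ Bsub (jk k) (n'k k) := fun k => hnf _ _ _
  -- the sum element
  set X : ∀ i, A i := fun i => ∑ k ∈ Finset.range (i+1), xk k i with hX
  set S : ℕ → ∀ i, A i := fun K => ∑ k ∈ Finset.range K, xk k with hS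
  have hT : ∀ K i, (X - S K) i ∈ Asub i (nk K) := by
    intro K i
    have hM : i + 1 ≤ max (i+1) K := le_max_left _ _
    have h1 : X i = ∑ k ∈ Finset.range (max (i+1) K), xk k i := by
      refine Finset.sum_subset (Finset.range_subset_range.mpr hM) fun k hk hk' => ?_
      simp only [Finset.mem_range] at hk hk'
      exact hx2' k i (by omega)
    obtain ⟨d, hd⟩ : ∃ d, max (i+1) K = K + d := ⟨max (i+1) K - K, by omega⟩
    rw [hd] at h1
    have h3 : (X - S K) i = ∑ l ∈ Finset.range d, xk (K + l) i := by
      rw [Pi.sub_apply, h1, hS]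
      simp only [Finset.sum_apply]
      rw [Finset.sum_range_add]
      abel
    rw [h3]
    refine AddSubgroup.sum_mem _ fun l _ => ?_
    by_cases hli : K + l ≤ i
    · exact hA i (hnmono (Nat.le_add_right K l)) (hx1' (K + l) i hli)
    · rw [hx2' (K + l) i (by omega)]; exact zero_mem _
  have hφX : ∀ k, φ X (jk k) ≠ 0 := by
    intro k
    have hdecomp : φ X = φ (S (k+1)) + φ (X - S (k+1)) := by
      rw [← map_add]
      congr 1
      abel
    have hmaps : φ (S (k+1)) = ∑ l ∈ Finset.range (k+1), φ (xk l) := by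
      rw [hS]
      exact map_sum φ _ _
    have happ : φ X (jk k) = φ (xk k) (jk k) + φ (X - S (k+1)) (jk k) := by
      rw [hdecomp, hmaps, DirectSum.add_apply, DFinsupp.finset_sum_apply,
        Finset.sum_range_succ]
      have hz : ∀ l ∈ Finset.range k, φ (xk l) (jk k) = 0 := by
        intro l hl
        simp only [Finset.mem_range] at hl
        rw [← DFinsupp.notMem_support_iff]
        intro hmem
        exact hjknot k (hJmono hl (hsupp l hmem))
      rw [Finset.sum_eq_zero hz, zero_add]
    have htail : φ (X - S (k+1)) (jk k) ∈ Bsub (jk k) (n'k k) := by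
      have := hφ (nk (k+1)) (X - S (k+1)) (fun i => hT (k+1) i) (jk k)
      exact hB (jk k) (hn' k) this
    intro h0
    apply hbad k
    have : φ (xk k) (jk k) = -(φ (X - S (k+1)) (jk k)) := by
      rw [happ] at h0; linear_combination (norm := abel) h0
    rw [this]
    exact neg_mem htail
  have hinjlt : ∀ a b, a < b → jk a ≠ jk b := by
    intro a b hab heq
    exact hjknot b (heq ▸ hJmono hab (hjkin a))
  have hinj : Function.Injective jk := by
    intro a b hab
    by_contra hne
    rcases Nat.lt_or_ge a b with h | h
    · exact hinjlt a b h hab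
    · exact hinjlt b a (lt_of_le_of_ne h (Ne.symm hne)) hab.symm
  have hmem : ∀ k, jk k ∈ ((φ X).support : Set J) := fun k => by
    simpa [DFinsupp.mem_support_iff] using hφX k
  exact (Set.infinite_of_injective_forall_mem hinj hmem) ((φ X).support.finite_toSet)
end

section
/- Let I be an uncountable set and let 𝓘 be a collection of subsets of I such that: (i) I ∉ 𝓘; (ii) every finite subset of I belongs to 𝓘; (iii) 𝓘 is closed under finite unions; (iv) 𝓘 is closed under taking subsets; (v) for every countable family (X_n)_{n∈ℕ} of pairwise disjoint subsets of I there exists n₀ with ⋃_{n ≥ n₀} X_n ∈ 𝓘. Then there exists a countably-additive, {0,1}-valued measure μ on the full power set of I with μ(I) = 1 and μ({x}) = 0 for all x ∈ I; that is, |I| is ω-measurable. -/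
/-- If an uncountable set `I` admits a family `𝓘` of subsets containing all finite sets but not
`I`, closed under finite unions and subsets, and such that every countable pairwise disjoint
family `(X n)` has a tail `⋃_{n ≥ n₀} X n` in `𝓘`, then `I` carries a countably additive
`{0,1}`-valued measure on the full power set with `μ I = 1` and `μ {x} = 0` for all `x`;
that is, `|I|` is `ω`-measurable. -/
theorem omega_measurable_of_ideal {I : Type*} (hunc : ¬ Countable I) (𝓘 : Set (Set I))
    (h1 : (Set.univ : Set I) ∉ 𝓘)
    (h2 : ∀ F : Set I, F.Finite → F ∈ 𝓘)
    (h3 : ∀ X Y : Set I, X ∈ 𝓘 → Y ∈ 𝓘 → X ∪ Y ∈ 𝓘)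
    (h4 : ∀ X Y : Set I, X ∈ 𝓘 → Y ⊆ X → Y ∈ 𝓘)
    (h5 : ∀ X : ℕ → Set I, Pairwise (Function.onFun Disjoint X) →
      ∃ n₀ : ℕ, (⋃ n ≥ n₀, X n) ∈ 𝓘) :
    ∃ μ : @MeasureTheory.Measure I ⊤,
      μ Set.univ = 1 ∧ (∀ x : I, μ {x} = 0) ∧ ∀ s : Set I, μ s = 0 ∨ μ s = 1 := by
  classical
  letI : MeasurableSpace I := ⊤
  -- finite unions of members of 𝓘 are in 𝓘
  have hfin : ∀ (n : ℕ) (Y : ℕ → Set I), (∀ k, Y k ∈ 𝓘) → (⋃ k < n, Y k) ∈ 𝓘 := by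
    intro n Y hY
    induction n with
    | zero => simpa using h2 ∅ Set.finite_empty
    | succ n ih =>
      have : (⋃ k < n + 1, Y k) = (⋃ k < n, Y k) ∪ Y n := by
        ext x
        simp only [Set.mem_iUnion, Set.mem_union, Nat.lt_succ_iff_lt_or_eq]
        constructor
        · rintro ⟨k, hk | rfl, hx⟩
          · exact Or.inl ⟨k, hk, hx⟩
          · exact Or.inr hx
        · rintro (⟨k, hk, hx⟩ | hx)
          · exact ⟨k, Or.inl hk, hx⟩
          · exact ⟨n, Or.inr rfl, hx⟩
      rw [this]
      exact h3 _ _ ih (hY n)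
  -- 𝓘 is a σ-ideal
  have hσ : ∀ X : ℕ → Set I, (∀ n, X n ∈ 𝓘) → (⋃ n, X n) ∈ 𝓘 := by
    intro X hX
    obtain ⟨n₀, hn₀⟩ := h5 (disjointed X) (disjoint_disjointed X)
    have hsplit : (⋃ n, X n) =
        (⋃ k < n₀, disjointed X k) ∪ (⋃ n ≥ n₀, disjointed X n) := by
      have : (⋃ n, disjointed X n) = ⋃ n, X n := iSup_disjointed X
      rw [← this]
      ext x
      simp only [Set.mem_iUnion, Set.mem_union]
      constructor
      · rintro ⟨n, hx⟩
        rcases lt_or_ge n n₀ with h | h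
        · exact Or.inl ⟨n, h, hx⟩
        · exact Or.inr ⟨n, h, hx⟩
      · rintro (⟨n, _, hx⟩ | ⟨n, _, hx⟩) <;> exact ⟨n, hx⟩
    rw [hsplit]
    exact h3 _ _ (hfin n₀ _ fun k => h4 _ _ (hX k) (disjointed_le X k)) hn₀
  -- there is an atom mod 𝓘
  have hatom : ∃ A : Set I, A ∉ 𝓘 ∧ ∀ S : Set I, A ∩ S ∈ 𝓘 ∨ A \ S ∈ 𝓘 := by
    by_contra hc
    push_neg at hc
    choose! S hS1 hS2 using hc
    set B : ℕ → Set I := fun n => Nat.rec Set.univ (fun _ Bn => Bn \ S Bn) n with hB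
    have hBsucc : ∀ n, B (n + 1) = B n \ S (B n) := fun n => rfl
    have hBpos : ∀ n, B n ∉ 𝓘 := by
      intro n
      induction n with
      | zero => exact h1
      | succ n ih => rw [hBsucc]; exact hS2 _ ih
    set X : ℕ → Set I := fun n => B n ∩ S (B n) with hXdef
    have hXpos : ∀ n, X n ∉ 𝓘 := fun n => hS1 _ (hBpos n)
    have hBmono : ∀ n m, n ≤ m → B m ⊆ B n := by
      intro n m hnm
      induction m with
      | zero => cases Nat.le_zero.mp hnm; exact subset_rfl
      | succ m ih =>
        rcases Nat.le_succ_iff.mp hnm with h | h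
        · exact (hBsucc m ▸ Set.diff_subset).trans (ih h)
        · cases h; exact subset_rfl
    have hdisj : Pairwise (Function.onFun Disjoint X) := by
      have key : ∀ n m, n < m → Disjoint (X n) (X m) := by
        intro n m hnm
        rw [Set.disjoint_left]
        intro x hxn hxm
        have hxBm : x ∈ B m := hxm.1
        have : x ∈ B (n + 1) := hBmono (n + 1) m hnm hxBm
        rw [hBsucc] at this
        exact this.2 hxn.2
      intro n m hnm
      rcases hnm.lt_or_gt with h | h
      · exact key n m h
      · exact (key m n h).symm
    obtain ⟨n₀, hn₀⟩ := h5 X hdisj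
    exact hXpos n₀ (h4 _ _ hn₀ (Set.subset_biUnion_of_mem (le_refl n₀)))
  obtain ⟨A, hA, hAatom⟩ := hatom
  -- define the measure
  refine ⟨MeasureTheory.Measure.ofMeasurable
      (fun s _ => if A ∩ s ∈ 𝓘 then 0 else 1)
      (by simp [Set.inter_empty, h2 ∅ Set.finite_empty]) ?_, ?_, ?_, ?_⟩
  · intro f _ hf
    by_cases h : A ∩ ⋃ i, f i ∈ 𝓘
    · have hall : ∀ i, A ∩ f i ∈ 𝓘 := fun i =>
        h4 _ _ h (Set.inter_subset_inter_right _ (Set.subset_iUnion f i))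
      simp [h, hall]
    · have hex : ∃ i, A ∩ f i ∉ 𝓘 := by
        by_contra h'
        push_neg at h'
        exact h (by rw [Set.inter_iUnion]; exact hσ _ h')
      obtain ⟨i, hi⟩ := hex
      have hAi : A \ f i ∈ 𝓘 := (hAatom (f i)).resolve_left hi
      have hj : ∀ j, j ≠ i → A ∩ f j ∈ 𝓘 := by
        intro j hji
        refine h4 _ _ hAi ?_
        intro x hx
        exact ⟨hx.1, Set.disjoint_left.mp (hf hji) hx.2⟩
      rw [tsum_eq_single i (fun j hji => by simp [hj j hji])]
      simp [h, hi]
  · rw [MeasureTheory.Measure.ofMeasurable_apply _ (by trivial)]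
    simp only [Set.inter_univ]
    simp [hA]
  · intro x
    rw [MeasureTheory.Measure.ofMeasurable_apply _ (by trivial)]
    have : A ∩ {x} ∈ 𝓘 :=
      h4 _ _ (h2 {x} (Set.finite_singleton x)) Set.inter_subset_right
    simp [this]
  · intro s
    rw [MeasureTheory.Measure.ofMeasurable_apply _ (by trivial)]
    by_cases h : A ∩ s ∈ 𝓘 <;> simp [h]
end

section
/- Let I be a set whose cardinality is not ω-measurable. Let (A_i)_{i∈I} and (B_j)_{j∈J} be families of abelian groups, φ : ∏_{i∈I} A_i → ⊕_{j∈J} B_j a group homomorphism, with descending chains of subgroups (A_{i,k})_{k∈ℕ} of A_i and (B_{j,k})_{k∈ℕ} of B_j satisfying φ(∏_{i∈I} A_{i,k}) ⊆ ⊕_{j∈J} B_{j,k} for all k ∈ ℕ. Then there exist finite subsets I' ⊆ I, J' ⊆ J and n₀ ∈ ℕ such that φ(∏_{i∈I∖I'} A_{i,n₀}) ⊆ (⊕_{j∈J'} B_j) + ⋂_{n∈ℕ} (⊕_{j∈J} B_{j,n}). -/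
/-- A set `I` is `ω`-measurable if it is uncountable and carries a nonprincipal countably
complete ultrafilter (equivalently, a countably additive non-trivial `{0,1}`-valued measure on
the full power set vanishing on singletons). -/
def IsOmegaMeasurable (I : Type*) : Prop :=
  ¬ Countable I ∧ ∃ U : Ultrafilter I, (∀ x : I, ({x} : Set I) ∉ U) ∧
    ∀ s : ℕ → Set I, (∀ n, s n ∈ U) → (⋂ n, s n) ∈ U

section ChaseAux

variable {I J : Type*} {A : I → Type*} {B : J → Type*}
  [∀ i, AddCommGroup (A i)] [∀ j, AddCommGroup (B j)]

/-- `w` lies in `(⨁_{j ∈ J'} B j) + ⋂ₙ (⨁ⱼ Bsub j n)`. -/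
def ChaseTgt (Bsub : ∀ j, ℕ → AddSubgroup (B j)) (J' : Finset J) (w : DirectSum J B) : Prop :=
  ∃ y z : DirectSum J B, w = y + z ∧ (∀ j ∉ J', y j = 0) ∧ ∀ (n : ℕ) (j : J), z j ∈ Bsub j n

/-- The conclusion of Chase's lemma holds for elements supported in `S`. -/
def ChaseGood (φ : (∀ i, A i) →+ DirectSum J B) (Asub : ∀ i, ℕ → AddSubgroup (A i))
    (Bsub : ∀ j, ℕ → AddSubgroup (B j)) (S : Set I) : Prop :=
  ∃ (I' : Finset I) (J' : Finset J) (n₀ : ℕ), ∀ x : ∀ i, A i,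
    (∀ i, x i ∈ Asub i n₀) → (∀ i, x i ≠ 0 → i ∈ S ∧ i ∉ I') →
      ChaseTgt Bsub J' (φ x)

variable (φ : (∀ i, A i) →+ DirectSum J B)
  (Asub : ∀ i, ℕ → AddSubgroup (A i)) (Bsub : ∀ j, ℕ → AddSubgroup (B j))

lemma chaseTgt_zero (J' : Finset J) : ChaseTgt Bsub J' 0 :=
  ⟨0, 0, by simp, fun j _ => rfl, fun n j => by
    simp only [DFinsupp.zero_apply]; exact zero_mem _⟩

lemma chaseTgt_add {J₁ J₂ : Finset J} {w₁ w₂ : DirectSum J B} [DecidableEq J]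
    (h₁ : ChaseTgt Bsub J₁ w₁) (h₂ : ChaseTgt Bsub J₂ w₂) :
    ChaseTgt Bsub (J₁ ∪ J₂) (w₁ + w₂) := by
  obtain ⟨y₁, z₁, e₁, hy₁, hz₁⟩ := h₁
  obtain ⟨y₂, z₂, e₂, hy₂, hz₂⟩ := h₂
  refine ⟨y₁ + y₂, z₁ + z₂, by rw [e₁, e₂]; abel, fun j hj => ?_, fun n j => ?_⟩
  · rw [Finset.mem_union, not_or] at hj
    rw [DFinsupp.add_apply, hy₁ j hj.1, hy₂ j hj.2, add_zero]
  · rw [DFinsupp.add_apply]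
    exact add_mem (hz₁ n j) (hz₂ n j)

lemma not_chaseTgt {J' : Finset J} {w : DirectSum J B}
    (h : ¬ ChaseTgt Bsub J' w) : ∃ j ∉ J', ∃ m, w j ∉ Bsub j m := by
  classical
  by_contra hc
  push_neg at hc
  apply h
  set z : DirectSum J B := DFinsupp.filter (fun j => j ∉ J') w with hz
  refine ⟨w - z, z, (sub_add_cancel _ _).symm, fun j hj => ?_, fun n j => ?_⟩
  · rw [DFinsupp.sub_apply, DFinsupp.filter_apply, if_pos hj, sub_self]
  · rw [DFinsupp.filter_apply]
    by_cases hj : j ∉ J'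
    · rw [if_pos hj]; exact hc j hj n
    · rw [if_neg hj]; exact zero_mem _

lemma chaseGood_mono {S S' : Set I} (hS : S' ⊆ S) (h : ChaseGood φ Asub Bsub S) :
    ChaseGood φ Asub Bsub S' := by
  obtain ⟨I', J', n₀, hg⟩ := h
  exact ⟨I', J', n₀, fun x h1 h2 => hg x h1 fun i hi => ⟨hS (h2 i hi).1, (h2 i hi).2⟩⟩

lemma chaseGood_of_subset_finset {S : Set I} (F : Finset I) (hS : S ⊆ ↑F) :
    ChaseGood φ Asub Bsub S := by
  refine ⟨F, ∅, 0, fun x h1 h2 => ?_⟩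
  have hx : x = 0 := funext fun i => by
    by_contra hne
    exact (h2 i hne).2 (hS (h2 i hne).1)
  rw [hx, map_zero]
  exact chaseTgt_zero Bsub ∅

lemma chaseGood_union (hA : ∀ i, Antitone (Asub i)) {S₁ S₂ : Set I}
    (h₁ : ChaseGood φ Asub Bsub S₁) (h₂ : ChaseGood φ Asub Bsub S₂) :
    ChaseGood φ Asub Bsub (S₁ ∪ S₂) := by
  classical
  obtain ⟨I₁, J₁, n₁, hg₁⟩ := h₁
  obtain ⟨I₂, J₂, n₂, hg₂⟩ := h₂
  refine ⟨I₁ ∪ I₂, J₁ ∪ J₂, max n₁ n₂, fun x h1 h2 => ?_⟩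
  set u : ∀ i, A i := fun i => if i ∈ S₁ then x i else 0 with hu
  set v : ∀ i, A i := fun i => if i ∈ S₁ then 0 else x i with hv
  have huv : x = u + v := funext fun i => by
    by_cases h : i ∈ S₁ <;> simp [hu, hv, h]
  have hTu : ChaseTgt Bsub J₁ (φ u) := by
    refine hg₁ u (fun i => ?_) (fun i hi => ?_)
    · by_cases h : i ∈ S₁
      · simp only [hu, if_pos h]
        exact hA i (le_max_left n₁ n₂) (h1 i)
      · simp only [hu, if_neg h]; exact zero_mem _
    · have hS : i ∈ S₁ := by
        by_contra h; apply hi; simp [hu, h]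
      have hx : x i ≠ 0 := by
        intro h; apply hi; simp [hu, h]
      exact ⟨hS, fun h => (h2 i hx).2 (Finset.mem_union_left _ h)⟩
  have hTv : ChaseTgt Bsub J₂ (φ v) := by
    refine hg₂ v (fun i => ?_) (fun i hi => ?_)
    · by_cases h : i ∈ S₁
      · simp only [hv, if_pos h]; exact zero_mem _
      · simp only [hv, if_neg h]
        exact hA i (le_max_right n₁ n₂) (h1 i)
    · have hS : i ∉ S₁ := by
        by_contra h; apply hi; simp [hv, h]
      have hx : x i ≠ 0 := by
        intro h; apply hi; simp [hv, h]
      have : i ∈ S₂ := ((h2 i hx).1).resolve_left hS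
      exact ⟨this, fun h => (h2 i hx).2 (Finset.mem_union_right _ h)⟩
  rw [huv, map_add]
  exact chaseTgt_add Bsub hTu hTv

lemma chase_bad_elim {S : Set I} (h : ¬ ChaseGood φ Asub Bsub S) (J' : Finset J) (n₀ : ℕ) :
    ∃ (x : ∀ i, A i) (j : J) (m : ℕ), (∀ i, x i ∈ Asub i n₀) ∧ (∀ i, x i ≠ 0 → i ∈ S) ∧
      j ∉ J' ∧ φ x j ∉ Bsub j m := by
  have h' : ¬ ∀ x : ∀ i, A i, (∀ i, x i ∈ Asub i n₀) →
      (∀ i, x i ≠ 0 → i ∈ S ∧ i ∉ (∅ : Finset I)) → ChaseTgt Bsub J' (φ x) :=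
    fun hall => h ⟨∅, J', n₀, hall⟩
  push_neg at h'
  obtain ⟨x, h1, h2, h3⟩ := h'
  obtain ⟨j, hj, m, hm⟩ := not_chaseTgt Bsub h3
  exact ⟨x, j, m, h1, fun i hi => (h2 i hi).1, hj, hm⟩

/-- The sliding hump: a decreasing, pointwise-vanishing sequence of "bad" sets is impossible. -/
lemma chase_hump (hA : ∀ i, Antitone (Asub i)) (hB : ∀ j, Antitone (Bsub j))
    (hφ : ∀ (k : ℕ) (x : ∀ i, A i), (∀ i, x i ∈ Asub i k) → ∀ j, φ x j ∈ Bsub j k)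
    (X : ℕ → Set I) (hbad : ∀ p, ¬ ChaseGood φ Asub Bsub (X p))
    (hX : Antitone X) (hvan : ∀ i, ∃ p, i ∉ X p) : False := by
  classical
  have H := fun p => chase_bad_elim φ Asub Bsub (hbad p)
  choose xf jf mf h1 h2 h3 h4 using H
  -- the recursive state: levels `k p` and used index sets `Jf p`
  let s : ℕ → ℕ × Finset J := fun p => Nat.rec ((0 : ℕ), (∅ : Finset J))
    (fun p c => (max c.1 (mf p c.2 c.1) + 1,
      (c.2 ∪ (φ (xf p c.2 c.1)).support) ∪ {jf p c.2 c.1})) p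
  let k : ℕ → ℕ := fun p => (s p).1
  let Jf : ℕ → Finset J := fun p => (s p).2
  let xs : ℕ → ∀ i, A i := fun p => xf p (Jf p) (k p)
  let js : ℕ → J := fun p => jf p (Jf p) (k p)
  let ms : ℕ → ℕ := fun p => mf p (Jf p) (k p)
  have hk : ∀ p, k (p + 1) = max (k p) (ms p) + 1 := fun p => rfl
  have hJ : ∀ p, Jf (p + 1) = (Jf p ∪ (φ (xs p)).support) ∪ {js p} := fun p => rfl
  have hk_mono : Monotone k := monotone_nat_of_le_succ fun p => by
    rw [hk]; exact (le_max_left _ _).trans (Nat.le_succ _)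
  have hmk : ∀ p q, p < q → ms p ≤ k q := fun p q hpq => by
    have : ms p ≤ k (p + 1) := by rw [hk]; exact (le_max_right _ _).trans (Nat.le_succ _)
    exact this.trans (hk_mono hpq)
  have hJ_mono : Monotone Jf := monotone_nat_of_le_succ fun p => by
    rw [hJ]
    exact (Finset.subset_union_left.trans Finset.subset_union_left)
  have hx_mem : ∀ p i, xs p i ∈ Asub i (k p) := fun p => h1 p (Jf p) (k p)
  have hx_supp : ∀ p i, xs p i ≠ 0 → i ∈ X p := fun p => h2 p (Jf p) (k p)
  have hj_not : ∀ p, js p ∉ Jf p := fun p => h3 p (Jf p) (k p)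
  have hφ_not : ∀ p, φ (xs p) (js p) ∉ Bsub (js p) (ms p) := fun p => h4 p (Jf p) (k p)
  have hj_mem_succ : ∀ p, js p ∈ Jf (p + 1) := fun p => by
    rw [hJ]; exact Finset.mem_union_right _ (Finset.mem_singleton_self _)
  have hsupp_sub : ∀ p, (φ (xs p)).support ⊆ Jf (p + 1) := fun p => by
    rw [hJ]
    exact Finset.subset_union_right.trans Finset.subset_union_left
  have hj_ne : ∀ p q, p < q → js p ≠ js q := by
    intro p q hpq he
    apply hj_not q
    rw [← he]
    exact hJ_mono (Nat.succ_le_of_lt hpq) (hj_mem_succ p)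
  have hφ_zero : ∀ p q, p < q → φ (xs p) (js q) = 0 := by
    intro p q hpq
    by_contra hne
    apply hj_not q
    exact hJ_mono (Nat.succ_le_of_lt hpq) (hsupp_sub p (DFinsupp.mem_support_iff.2 hne))
  -- when coordinates die out
  let P : I → ℕ := fun i => Nat.find (hvan i)
  have hPzero : ∀ i p, P i ≤ p → xs p i = 0 := by
    intro i p hp
    by_contra hne
    exact Nat.find_spec (hvan i) (hX hp (hx_supp p i hne))
  -- the hump element
  let xstar : ∀ i, A i := fun i => ∑ p ∈ Finset.range (P i), xs p i
  let tails : ℕ → ∀ i, A i := fun N i => ∑ p ∈ Finset.Ico N (P i), xs p i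
  have hsplit : ∀ N, xstar = (fun i => ∑ p ∈ Finset.range N, xs p i) + tails N := by
    intro N
    funext i
    show (∑ p ∈ Finset.range (P i), xs p i)
      = (∑ p ∈ Finset.range N, xs p i) + ∑ p ∈ Finset.Ico N (P i), xs p i
    rcases le_or_gt N (P i) with h | h
    · simp only [Finset.range_eq_Ico]
      exact (Finset.sum_Ico_consecutive _ (Nat.zero_le N) h).symm
    · rw [Finset.Ico_eq_empty (by omega), Finset.sum_empty, add_zero]
      refine Finset.sum_subset (Finset.range_subset_range.2 h.le) fun p hp hnp => ?_
      refine hPzero i p ?_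
      simp only [Finset.mem_range, not_lt] at hnp
      exact hnp
  have htails : ∀ N i, tails N i ∈ Asub i (k N) := by
    intro N i
    refine sum_mem fun p hp => ?_
    exact hA i (hk_mono (Finset.mem_Ico.1 hp).1) (hx_mem p i)
  have hne : ∀ q, φ xstar (js q) ≠ 0 := by
    intro q
    have e1 : φ xstar = (∑ p ∈ Finset.range (q + 1), φ (xs p)) + φ (tails (q + 1)) := by
      rw [hsplit (q + 1), map_add, ← map_sum]
      congr 1
      congr 1
      funext i
      exact (Finset.sum_apply i (Finset.range (q + 1)) xs).symm
    have e2 : φ xstar (js q) = φ (xs q) (js q) + φ (tails (q + 1)) (js q) := by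
      rw [e1, DFinsupp.add_apply, DFinsupp.finset_sum_apply, Finset.sum_range_succ,
        Finset.sum_eq_zero (fun p hp => hφ_zero p q (Finset.mem_range.1 hp)), zero_add]
    have e3 : φ (tails (q + 1)) (js q) ∈ Bsub (js q) (ms q) := by
      refine hB (js q) ?_ (hφ (k (q + 1)) (tails (q + 1)) (htails (q + 1)) (js q))
      rw [hk]; exact (le_max_right _ _).trans (Nat.le_succ _)
    intro h0
    apply hφ_not q
    have : φ (xs q) (js q) = - φ (tails (q + 1)) (js q) :=
      eq_neg_of_add_eq_zero_left (e2.symm.trans h0)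
    rw [this]
    exact neg_mem e3
  have hinj : Function.Injective js := by
    intro p q h
    rcases lt_trichotomy p q with h' | h' | h'
    · exact absurd h (hj_ne p q h')
    · exact h'
    · exact absurd h.symm (hj_ne q p h')
  have hfin : ((φ xstar).support : Set J).Infinite :=
    Set.infinite_of_injective_forall_mem hinj fun q => by
      rw [Finset.mem_coe, DFinsupp.mem_support_iff]
      exact hne q
  exact hfin (Finset.finite_toSet _)

end ChaseAux

/-- **Uncountable Chase Lemma.** If `I` is not `ω`-measurable, then for any Chase system
`φ : ∏_{i ∈ I} A i →+ ⨁_{j ∈ J} B j` with descending chains `Asub i k`, `Bsub j k` such that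
`φ (∏ᵢ Asub i k) ⊆ ⨁ⱼ Bsub j k` for all `k`, there are finite `I' ⊆ I`, `J' ⊆ J` and `n₀`
with `φ (∏_{i ∈ I ∖ I'} Asub i n₀) ⊆ (⨁_{j ∈ J'} B j) + ⋂ₙ (⨁ⱼ Bsub j n)`. -/
theorem uncountable_chase_lemma {I J : Type*} (hI : ¬ IsOmegaMeasurable I)
    (A : I → Type*) (B : J → Type*)
    [∀ i, AddCommGroup (A i)] [∀ j, AddCommGroup (B j)]
    (φ : (∀ i, A i) →+ DirectSum J B)
    (Asub : ∀ i, ℕ → AddSubgroup (A i)) (Bsub : ∀ j, ℕ → AddSubgroup (B j))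
    (hA : ∀ i, Antitone (Asub i)) (hB : ∀ j, Antitone (Bsub j))
    (hφ : ∀ (k : ℕ) (x : ∀ i, A i), (∀ i, x i ∈ Asub i k) → ∀ j, φ x j ∈ Bsub j k) :
    ∃ (I' : Finset I) (J' : Finset J) (n₀ : ℕ),
      ∀ x : ∀ i, A i, (∀ i, i ∉ I' → x i ∈ Asub i n₀) → (∀ i ∈ I', x i = 0) →
        ∃ y z : DirectSum J B, φ x = y + z ∧ (∀ j ∉ J', y j = 0) ∧
          ∀ (n : ℕ) (j : J), z j ∈ Bsub j n := by
  classical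
  have main : ChaseGood φ Asub Bsub Set.univ := by
    by_contra hbad
    by_cases hc : Countable I
    · rcases isEmpty_or_nonempty I with he | hne
      · exact hbad (chaseGood_of_subset_finset φ Asub Bsub ∅ fun i _ => isEmptyElim i)
      · obtain ⟨f, hf⟩ := exists_surjective_nat I
        refine chase_hump φ Asub Bsub hA hB hφ
          (fun p => {i | ∀ q < p, f q ≠ i}) (fun p hGp => ?_) (fun p q hpq i hi => ?_) (fun i => ?_)
        · obtain ⟨I', J', n₀, hg⟩ := hGp
          refine hbad ⟨I' ∪ (Finset.range p).image f, J', n₀, fun x hx1 hx2 => ?_⟩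
          refine hg x hx1 fun i hi => ⟨fun q hq hfq => ?_, fun hiI' => ?_⟩
          · exact (hx2 i hi).2
              (Finset.mem_union_right _ (Finset.mem_image.2 ⟨q, Finset.mem_range.2 hq, hfq⟩))
          · exact (hx2 i hi).2 (Finset.mem_union_left _ hiI')
        · exact fun q' hq' => hi q' (lt_of_lt_of_le hq' hpq)
        · obtain ⟨q, hq⟩ := hf i
          exact ⟨q + 1, fun hmem => hmem q (Nat.lt_succ_self q) hq⟩
    · -- uncountable case: build an ultrafilter avoiding the "good" ideal
      let F : Filter I :=
        { sets := {X | ChaseGood φ Asub Bsub Xᶜ}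
          univ_sets := by
            rw [Set.mem_setOf_eq, Set.compl_univ]
            exact chaseGood_of_subset_finset φ Asub Bsub ∅ (by simp)
          sets_of_superset := fun hX hXY =>
            chaseGood_mono φ Asub Bsub (Set.compl_subset_compl.2 hXY) hX
          inter_sets := fun hX hY => by
            rw [Set.mem_setOf_eq, Set.compl_inter]
            exact chaseGood_union φ Asub Bsub hA hX hY }
      have hFne : F.NeBot := by
        refine ⟨fun hb => hbad ?_⟩
        have h0 : (∅ : Set I) ∈ F := by rw [hb]; exact Filter.mem_bot
        have : ChaseGood φ Asub Bsub (∅ : Set I)ᶜ := h0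
        rwa [Set.compl_empty] at this
      let U := Ultrafilter.of F
      have hUF : (↑U : Filter I) ≤ F := Ultrafilter.of_le F
      have hUbad : ∀ X ∈ U, ¬ ChaseGood φ Asub Bsub X := by
        intro X hX hgood
        have hXc : Xᶜ ∈ U := by
          refine Ultrafilter.mem_coe.1 (Filter.le_def.1 hUF _ ?_)
          show ChaseGood φ Asub Bsub Xᶜᶜ
          rwa [compl_compl]
        have h0 : (∅ : Set I) ∈ (U : Filter I) := by
          have := Filter.inter_mem (Ultrafilter.mem_coe.2 hX) (Ultrafilter.mem_coe.2 hXc)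
          rwa [Set.inter_compl_self] at this
        exact Filter.empty_notMem (U : Filter I) h0
      by_cases hcc : ∀ s : ℕ → Set I, (∀ n, s n ∈ U) → (⋂ n, s n) ∈ U
      · exact hI ⟨hc, U,
          fun x hx => hUbad _ hx (chaseGood_of_subset_finset φ Asub Bsub {x} (by simp)), hcc⟩
      · push_neg at hcc
        obtain ⟨s, hs, hns⟩ := hcc
        refine chase_hump φ Asub Bsub hA hB hφ
          (fun p => {i | (∀ q ≤ p, i ∈ s q) ∧ i ∉ ⋂ n, s n})
          (fun p => hUbad _ ?_) (fun p q hpq i hi => ?_) (fun i => ?_)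
        · have h1 : {i | ∀ q ≤ p, i ∈ s q} ∈ U := by
            have h1' : (⋂ q ∈ Finset.Iic p, s q) ∈ (U : Filter I) :=
              (Filter.biInter_finset_mem _).2 fun q _ => Ultrafilter.mem_coe.2 (hs q)
            have : (⋂ q ∈ Finset.Iic p, s q) = {i | ∀ q ≤ p, i ∈ s q} := by
              ext i; simp [Finset.mem_Iic]
            rw [← this]
            exact Ultrafilter.mem_coe.1 h1'
          have h2 : (⋂ n, s n)ᶜ ∈ U := Ultrafilter.compl_mem_iff_notMem.2 hns
          have := Filter.inter_mem (Ultrafilter.mem_coe.2 h1) (Ultrafilter.mem_coe.2 h2)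
          exact Ultrafilter.mem_coe.1 this
        · exact ⟨fun q' hq' => hi.1 q' (hq'.trans hpq), hi.2⟩
        · by_cases hi : i ∈ ⋂ n, s n
          · exact ⟨0, fun hmem => hmem.2 hi⟩
          · rw [Set.mem_iInter] at hi
            push_neg at hi
            obtain ⟨n, hn⟩ := hi
            exact ⟨n, fun hmem => hn (hmem.1 n le_rfl)⟩
  obtain ⟨I', J', n₀, hg⟩ := main
  refine ⟨I', J', n₀, fun x hx1 hx2 => ?_⟩
  refine hg x (fun i => ?_) (fun i hxi => ⟨trivial, fun hi => hxi (hx2 i hi)⟩)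
  by_cases hi : i ∈ I'
  · rw [hx2 i hi]; exact zero_mem _
  · exact hx1 i hi
end

section
/- Let I be a set of non-ω-measurable cardinality, J an infinite set, (A_i)_{i∈I}, (B_j)_{j∈J} families of abelian groups with |A_i| < |J| for all i ∈ I, and φ : ∏_{i∈I} A_i → ⊕_{j∈J} B_j a surjective group homomorphism. Suppose given descending chains of subgroups (A_{i,k})_{k∈ℕ} and (B_{j,k})_{k∈ℕ} such that for every k ∈ ℕ the restriction of φ to ∏_{i∈I} A_{i,k} maps onto ⊕_{j∈J} B_{j,k}. Then there exist n₀ ∈ ℕ and an infinite subset L ⊆ J such that B_{j,n} = B_{j,n₀} for all j ∈ L and all n ≥ n₀. -/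
universe u

/-!
Call `E ⊆ I` good if, from some level `m` on, every `x ∈ ∏ᵢ Asub i m` supported on `E` has
`φ x j ∈ ⋂ₙ Bsub j n` for all `j` outside a set of cardinality `< #J`. A diagonal argument in
the style of Chase (choose `x_k` supported on `T k` whose images live on new coordinates `j_k`,
then sum the `x_k` coordinatewise) shows that a point-finite sequence `T` cannot consist of bad
sets. Hence the good sets form a σ-ideal containing the singletons (as `#(A i) < #J`) in which
every disjoint sequence has a good member. If `I` itself were bad, an atom of this σ-ideal would
carry a countably complete nonprincipal ultrafilter. So `I` is good, and lifting elements of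
`⨁ⱼ Bsub j m` along the surjective restrictions shows `Bsub j n = Bsub j m` for all `n ≥ m` and
all but fewer than `#J` coordinates `j`.
-/

open Cardinal Filter Function Set

theorem Cardinal.mk_iUnion_lt_of_finite {α ι : Type u} {c : Cardinal} (hc : ℵ₀ ≤ c)
    (hι : #ι < c) {s : ι → Set α} (hs : ∀ i, (s i).Finite) : #(⋃ i, s i) < c := by
  rcases finite_or_infinite ι with _ | _
  · exact (finite_iUnion hs).lt_aleph0.trans_le hc
  · calc #(⋃ i, s i) ≤ #ι * ⨆ i, #(s i) := mk_iUnion_le s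
      _ ≤ #ι * ℵ₀ := by gcongr; exact ciSup_le' fun i => (hs i).lt_aleph0.le
      _ = #ι := mul_aleph0_eq (aleph0_le_mk ι)
      _ < c := hι

theorem Finset.exists_eq_sum_range_add_sum_Ico {ι : Type*} {G : ι → Type*}
    [∀ i, AddCommMonoid (G i)] (x : ℕ → ∀ i, G i) (hx : ∀ i, ∀ᶠ k in atTop, x k i = 0) :
    ∃ y : ∀ i, G i, ∀ i M, ∃ N, y i = ∑ k ∈ range M, x k i + ∑ k ∈ Ico M N, x k i := by
  choose N hN using fun i => eventually_atTop.1 (hx i)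
  refine ⟨fun i => ∑ k ∈ range (N i), x k i, fun i M => ⟨max (N i) M, ?_⟩⟩
  rw [sum_range_add_sum_Ico _ (le_max_right _ _),
    eventually_constant_sum (hN i) (le_max_left _ _)]

namespace Filter

def cosmall (J : Type*) [Infinite J] : Filter J :=
  comk (fun s => #s < #J) (by simpa using aleph0_pos.trans_le (aleph0_le_mk J))
    (fun _ ht _ hst => (mk_le_mk_of_subset hst).trans_lt ht)
    fun _ hs _ ht => (mk_union_le _ _).trans_lt (add_lt_of_lt (aleph0_le_mk J) hs ht)

variable {J : Type*} [Infinite J] {s : Set J}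

theorem compl_mem_cosmall : sᶜ ∈ cosmall J ↔ #s < #J := compl_mem_comk

theorem cosmall_le_cofinite : cosmall J ≤ cofinite := fun s hs => by
  rw [← compl_compl s, compl_mem_cosmall]
  exact hs.lt_aleph0.trans_le (aleph0_le_mk J)

instance : NeBot (cosmall J) :=
  ⟨fun h => by simpa using compl_mem_cosmall.1 (by simp [h] : (univ : Set J)ᶜ ∈ cosmall J)⟩

theorem infinite_of_mem_cosmall (hs : s ∈ cosmall J) : s.Infinite := fun hfin => by
  obtain ⟨j, hjs, hjs'⟩ :=
    nonempty_of_mem (inter_mem hs (cosmall_le_cofinite hfin.compl_mem_cofinite))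
  exact hjs' hjs

end Filter

theorem exists_atom_of_pairwise_disjoint {I : Type*} (p : Set I → Prop) (huniv : ¬ p univ)
    (hdisjoint : ∀ D : ℕ → Set I, Pairwise (Disjoint on D) → ∃ k, p (D k)) :
    ∃ R, ¬ p R ∧ ∀ s, p (R ∩ s) ∨ p (R \ s) := by
  by_contra! hsplit
  choose! split hsplit using hsplit
  set r : ℕ → Set I := fun k => (fun R => R \ split R)^[k] univ
  have hr_succ (k : ℕ) : r (k + 1) = r k \ split (r k) := iterate_succ_apply' ..
  have hr (k : ℕ) : ¬ p (r k) := by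
    induction k with
    | zero => exact huniv
    | succ k ih => rw [hr_succ]; exact (hsplit _ ih).2
  have hanti : Antitone r := antitone_nat_of_succ_le fun k => by rw [hr_succ]; exact sdiff_subset
  obtain ⟨k, hk⟩ := hdisjoint (fun k => r k ∩ split (r k)) <| (pairwise_disjoint_on _).2
    fun a b hab => disjoint_left.2 fun i hia hib =>
      (hr_succ a ▸ hanti (Nat.succ_le_of_lt hab) hib.1).2 hia.2
  exact (hsplit _ (hr k)).1 hk

theorem isOmegaMeasurable_of_sigmaIdeal {I : Type*} (p : Set I → Prop)
    (hmono : ∀ ⦃s t⦄, s ⊆ t → p t → p s)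
    (hsUnion : ∀ S : Set (Set I), S.Countable → (∀ s ∈ S, p s) → p (⋃₀ S))
    (hsingleton : ∀ x, p {x}) (huniv : ¬ p univ)
    (hdisjoint : ∀ D : ℕ → Set I, Pairwise (Disjoint on D) → ∃ k, p (D k)) :
    IsOmegaMeasurable I := by
  have hunion : ∀ ⦃s t⦄, p s → p t → p (s ∪ t) := fun s t hs ht => by
    simpa using hsUnion {s, t} (toFinite _).countable (by simp [hs, ht])
  have hiUnion (s : ℕ → Set I) (hs : ∀ n, p (s n)) : p (⋃ n, s n) := by
    simpa using hsUnion (range s) (countable_range s) (by simpa using hs)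
  obtain ⟨R, hR, hatom⟩ := exists_atom_of_pairwise_disjoint p huniv hdisjoint
  let U : Ultrafilter I := Ultrafilter.ofComplNotMemIff
    { sets := {s | p (R \ s)}
      univ_sets := by simpa using hsUnion ∅ countable_empty (by simp)
      sets_of_superset := fun hs hst => hmono (sdiff_subset_sdiff_right hst) hs
      inter_sets := fun hs ht => by simpa only [mem_ofPred_eq, sdiff_inter] using hunion hs ht }
    fun s => by
      simp only [Filter.mem_mk, mem_ofPred_eq, sdiff_compl]
      refine ⟨(hatom s).resolve_left, fun hs hs' => hR ?_⟩
      simpa only [inter_union_sdiff] using hunion hs' hs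
  refine ⟨fun hI => huniv ?_, U, fun x hx => hR ?_, fun s hs => ?_⟩
  · simpa [iUnion_of_singleton] using
      hsUnion (range singleton) (countable_range _) (by simpa using hsingleton)
  · exact hmono (by simp) (hunion hx (hsingleton x))
  · show p (R \ ⋂ n, s n)
    rw [sdiff_iInter]
    exact hiUnion _ hs

section Chase

variable {I : Type*} {J : Type u} {A : I → Type u} {B : J → Type*}
  [∀ i, AddCommGroup (A i)] [∀ j, AddCommGroup (B j)]
  {φ : (∀ i, A i) →+ DirectSum J B} {Asub : ∀ i, ℕ → AddSubgroup (A i)}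
  {Bsub : ∀ j, ℕ → AddSubgroup (B j)}

variable (φ Asub Bsub) in
def MapsLevelwise : Prop :=
  ∀ (k : ℕ) (x : ∀ i, A i), (∀ i, x i ∈ Asub i k) → ∀ j, φ x j ∈ Bsub j k

theorem exists_apply_mem_of_eventually_eq_zero (hφ : MapsLevelwise φ Asub Bsub)
    (x : ℕ → ∀ i, A i) (j : ℕ → J) (n : ℕ → ℕ)
    (hx : ∀ i, ∀ᶠ k in atTop, x k i = 0) (hlevel : ∀ l k, l < k → ∀ i, x k i ∈ Asub i (n l))
    (hvanish : ∀ l k, l < k → φ (x l) (j k) = 0) :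
    ∃ k, φ (x k) (j k) ∈ Bsub (j k) (n k) := by
  classical
  by_contra! hnot
  obtain ⟨y, hy⟩ := Finset.exists_eq_sum_range_add_sum_Ico x hx
  have htail (l : ℕ) : φ y (j l) - φ (x l) (j l) ∈ Bsub (j l) (n l) := by
    have : φ y (j l) - φ (x l) (j l) = φ (y - ∑ k ∈ Finset.range (l + 1), x k) (j l) := by
      rw [map_sub, map_sum, DirectSum.sub_apply, DFinsupp.finsetSum_apply,
        Finset.sum_range_succ, Finset.sum_eq_zero fun k hk => hvanish k l (Finset.mem_range.1 hk),
        zero_add]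
    rw [this]
    refine hφ _ _ (fun i => ?_) _
    obtain ⟨N, hN⟩ := hy i (l + 1)
    rw [Pi.sub_apply, Finset.sum_apply, hN, add_sub_cancel_left]
    exact AddSubgroup.sum_mem _ fun k hk => hlevel l k (Finset.mem_Ico.1 hk).1 i
  have hsupport (l : ℕ) : j l ∈ (φ y).support := DFinsupp.mem_support_iff.2 fun h0 =>
    hnot l (by simpa [h0] using htail l)
  have hne (l k : ℕ) (hlk : l < k) : j l ≠ j k := fun h =>
    hnot l (by rw [h, hvanish l k hlk]; exact zero_mem _)
  have hinj : Injective j := fun a b hab => by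
    by_contra h
    rcases lt_or_gt_of_ne h with h | h
    exacts [hne a b h hab, hne b a h hab.symm]
  exact infinite_range_of_injective hinj
    ((φ y).support.finite_toSet.subset (range_subset_iff.2 hsupport))

variable [Infinite J]
variable (φ Asub Bsub) in
def IsGood (E : Set I) : Prop :=
  ∃ m, ∀ᶠ j in cosmall J, ∀ x : ∀ i, A i, (∀ i, x i ∈ Asub i m) → (∀ i ∉ E, x i = 0) →
    ∀ n, φ x j ∈ Bsub j n

theorem IsGood.mono {E E' : Set I} (h : E ⊆ E') : IsGood φ Asub Bsub E' → IsGood φ Asub Bsub E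
  | ⟨m, hm⟩ => ⟨m, hm.mono fun _ hj x hx hxE => hj x hx fun i hi => hxE i (mt (@h i) hi)⟩

theorem IsGood.union (hA : ∀ i, Antitone (Asub i)) {E E' : Set I} :
    IsGood φ Asub Bsub E → IsGood φ Asub Bsub E' → IsGood φ Asub Bsub (E ∪ E')
  | ⟨m, hm⟩, ⟨m', hm'⟩ => by
    classical
    refine ⟨max m m', (hm.and hm').mono fun j ⟨hj, hj'⟩ x hx hxE n => ?_⟩
    have hxm (i : I) : x i ∈ Asub i m := hA i (le_max_left m m') (hx i)
    have hxm' (i : I) : x i ∈ Asub i m' := hA i (le_max_right m m') (hx i)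
    rw [← add_sub_cancel (E.piecewise x 0) x, map_add, DirectSum.add_apply]
    refine add_mem (hj _ (fun i => ?_) (fun i hi => piecewise_eq_of_notMem _ _ _ hi) n)
      (hj' _ (fun i => sub_mem (hxm' i) ?_) (fun i hi => ?_) n)
    · by_cases hiE : i ∈ E <;> simp [hiE, hxm i]
    · by_cases hiE : i ∈ E <;> simp [hiE, hxm' i]
    · by_cases hiE : i ∈ E
      · simp [hiE]
      · simp [hiE, hxE i (by simp [hiE, hi])]

theorem isGood_empty : IsGood φ Asub Bsub ∅ :=
  ⟨0, .of_forall fun _ x _ hx n => by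
    rw [show x = 0 from funext fun i => hx i (notMem_empty i), map_zero]
    exact zero_mem _⟩

theorem isGood_singleton (hcard : ∀ i, #(A i) < #J) (i₀ : I) : IsGood φ Asub Bsub {i₀} := by
  classical
  have hsmall : #(⋃ a : A i₀, ((φ (Pi.single i₀ a)).support : Set J)) < #J :=
    mk_iUnion_lt_of_finite (aleph0_le_mk J) (hcard i₀) fun a => Finset.finite_toSet _
  refine ⟨0, eventually_of_mem (compl_mem_cosmall.2 hsmall) fun j hj x _ hx n => ?_⟩
  have hx : x = Pi.single i₀ (x i₀) := funext fun i => by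
    by_cases hi : i = i₀
    · subst hi; simp
    · simp [hi, hx i hi]
  simp only [mem_compl_iff, mem_iUnion, not_exists, Finset.mem_coe,
    DFinsupp.mem_support_iff, not_not] at hj
  rw [hx, hj]
  exact zero_mem _

theorem exists_of_not_isGood {E : Set I} (hE : ¬ IsGood φ Asub Bsub E) (m : ℕ) {F : Set J}
    (hF : F.Finite) : ∃ j ∉ F, ∃ x : ∀ i, A i,
      (∀ i, x i ∈ Asub i m) ∧ (∀ i ∉ E, x i = 0) ∧ ∃ n, φ x j ∉ Bsub j n := by
  simp only [IsGood, not_exists, not_eventually, not_forall] at hE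
  obtain ⟨j, ⟨x, hx, hxE, n, hn⟩, hjF⟩ :=
    ((hE m).and_eventually (cosmall_le_cofinite hF.compl_mem_cofinite)).exists
  exact ⟨j, hjF, x, hx, hxE, n, hn⟩

theorem exists_isGood_of_eventually_notMem (hA : ∀ i, Antitone (Asub i))
    (hφ : MapsLevelwise φ Asub Bsub)
    (T : ℕ → Set I) (hT : ∀ i, ∀ᶠ k in atTop, i ∉ T k) : ∃ k, IsGood φ Asub Bsub (T k) := by
  classical
  by_contra! hbad
  -- steps of the construction are tuples `(k, j, n, x)`
  let P : ℕ × J × ℕ × (∀ i, A i) → Prop := fun s =>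
    (∀ i ∉ T s.1, s.2.2.2 i = 0) ∧ φ s.2.2.2 s.2.1 ∉ Bsub s.2.1 s.2.2.1
  let r : ℕ × J × ℕ × (∀ i, A i) → ℕ × J × ℕ × (∀ i, A i) → Prop := fun s t =>
    s.1 < t.1 ∧ (∀ i, t.2.2.2 i ∈ Asub i s.2.2.1) ∧ φ s.2.2.2 t.2.1 = 0
  obtain ⟨f, hP, hr⟩ := exists_seq_of_forall_finset_exists P r fun S _ => by
    obtain ⟨j, hjS, x, hx, hxT, n, hn⟩ := exists_of_not_isGood (hbad (S.sup Prod.fst + 1))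
      (S.sup fun s => s.2.2.1) (F := ⋃ s ∈ S, (φ s.2.2.2).support)
      (S.finite_toSet.biUnion fun s _ => Finset.finite_toSet _)
    refine ⟨(S.sup Prod.fst + 1, j, n, x), ⟨hxT, hn⟩, fun s hs =>
      ⟨Nat.lt_succ_of_le (Finset.le_sup hs),
        fun i => hA i (Finset.le_sup (f := fun s => s.2.2.1) hs) (hx i), ?_⟩⟩
    simpa using mt (mem_biUnion hs) hjS
  have hindex : StrictMono fun k => (f k).1 := fun a b h => (hr a b h).1
  obtain ⟨k, hk⟩ := exists_apply_mem_of_eventually_eq_zero hφ (fun k => (f k).2.2.2)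
    (fun k => (f k).2.1) (fun k => (f k).2.2.1)
    (fun i => (hindex.tendsto_atTop.eventually (hT i)).mono fun k hk => (hP k).1 i hk)
    (fun l k h => (hr l k h).2.1) (fun l k h => (hr l k h).2.2)
  exact (hP k).2 hk

theorem isGood_iUnion (hA : ∀ i, Antitone (Asub i))
    (hφ : MapsLevelwise φ Asub Bsub)
    {g : ℕ → Set I} (hg : ∀ n, IsGood φ Asub Bsub (g n)) : IsGood φ Asub Bsub (⋃ n, g n) := by
  have hacc (k : ℕ) : IsGood φ Asub Bsub (accumulate g k) := by
    induction k with
    | zero => rw [accumulate_zero_nat]; exact hg 0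
    | succ k ih => rw [accumulate_succ]; exact ih.union hA (hg _)
  obtain ⟨k, hk⟩ := exists_isGood_of_eventually_notMem hA hφ
    (fun k => (⋃ n, g n) \ accumulate g k) fun i => by
      by_cases hi : i ∈ ⋃ n, g n
      · obtain ⟨n, hn⟩ := mem_iUnion.1 hi
        exact eventually_atTop.2
          ⟨n, fun k hk h => h.2 (monotone_accumulate hk (subset_accumulate hn))⟩
      · exact .of_forall fun k h => hi h.1
  exact (hk.union hA (hacc k)).mono (by rw [sdiff_union_self]; exact subset_union_left)

theorem isGood_sUnion (hA : ∀ i, Antitone (Asub i))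
    (hφ : MapsLevelwise φ Asub Bsub)
    {S : Set (Set I)} (hS : S.Countable) (hg : ∀ E ∈ S, IsGood φ Asub Bsub E) :
    IsGood φ Asub Bsub (⋃₀ S) := by
  rcases S.eq_empty_or_nonempty with rfl | hne
  · rw [sUnion_empty]
    exact isGood_empty
  · obtain ⟨g, rfl⟩ := hS.exists_eq_range hne
    rw [sUnion_range]
    exact isGood_iUnion hA hφ fun n => hg _ (mem_range_self n)

theorem exists_isGood_of_pairwise_disjoint (hA : ∀ i, Antitone (Asub i))
    (hφ : MapsLevelwise φ Asub Bsub)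
    {D : ℕ → Set I} (hD : Pairwise (Disjoint on D)) : ∃ k, IsGood φ Asub Bsub (D k) :=
  exists_isGood_of_eventually_notMem hA hφ D fun i => by
    rw [← Nat.cofinite_eq_atTop]
    exact Set.Finite.eventually_cofinite_notMem (s := {k | i ∈ D k})
      (Set.Subsingleton.finite fun a ha b hb => hD.eq (not_disjoint_iff.2 ⟨i, ha, hb⟩))

theorem eventually_eq_of_isGood_univ (hB : ∀ j, Antitone (Bsub j))
    (hressurj : ∀ (k : ℕ) (b : DirectSum J B), (∀ j, b j ∈ Bsub j k) →
      ∃ x : ∀ i, A i, (∀ i, x i ∈ Asub i k) ∧ φ x = b)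
    (h : IsGood φ Asub Bsub univ) : ∃ m, ∀ᶠ j in cosmall J, ∀ n ≥ m, Bsub j n = Bsub j m := by
  classical
  obtain ⟨m, hm⟩ := h
  refine ⟨m, hm.mono fun j hj n hn => (hB j hn).antisymm fun b hb => ?_⟩
  obtain ⟨x, hx, hxb⟩ := hressurj m (DirectSum.of B j b) fun j' => by
    by_cases h : j = j'
    · subst h; simpa using hb
    · simp [DirectSum.of_eq_of_ne _ _ _ (Ne.symm h)]
  simpa [hxb] using hj x hx (fun i hi => absurd (mem_univ i) hi) n

end Chase

theorem chase_descending_chain_general {I : Type u} {J : Type u} (hI : ¬ IsOmegaMeasurable I)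
    [Infinite J] (A : I → Type u) (B : J → Type u)
    [∀ i, AddCommGroup (A i)] [∀ j, AddCommGroup (B j)]
    (hcard : ∀ i, Cardinal.mk (A i) < Cardinal.mk J)
    (φ : (∀ i, A i) →+ DirectSum J B)
    (Asub : ∀ i, ℕ → AddSubgroup (A i)) (Bsub : ∀ j, ℕ → AddSubgroup (B j))
    (hA : ∀ i, Antitone (Asub i)) (hB : ∀ j, Antitone (Bsub j))
    (hφ : ∀ (k : ℕ) (x : ∀ i, A i), (∀ i, x i ∈ Asub i k) → ∀ j, φ x j ∈ Bsub j k)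
    (hressurj : ∀ (k : ℕ) (b : DirectSum J B), (∀ j, b j ∈ Bsub j k) →
      ∃ x : ∀ i, A i, (∀ i, x i ∈ Asub i k) ∧ φ x = b) :
    ∃ (n₀ : ℕ) (L : Set J), L.Infinite ∧ ∀ j ∈ L, ∀ n ≥ n₀, Bsub j n = Bsub j n₀ := by
  have hgood : IsGood φ Asub Bsub univ := by
    by_contra hbad
    exact hI (isOmegaMeasurable_of_sigmaIdeal _ (fun _ _ => IsGood.mono)
      (fun _ => isGood_sUnion hA hφ) (isGood_singleton hcard) hbad
      fun _ => exists_isGood_of_pairwise_disjoint hA hφ)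
  obtain ⟨n₀, hn₀⟩ := eventually_eq_of_isGood_univ hB hressurj hgood
  exact ⟨n₀, _, infinite_of_mem_cosmall hn₀, fun j hj => hj⟩

/-- For a Chase system with `I` non-`ω`-measurable, `J` infinite with `|A i| < |J|` for all
`i`, `φ` surjective and all restrictions `∏ᵢ Asub i k → ⨁ⱼ Bsub j k` surjective, there are
`n₀ : ℕ` and an infinite `L ⊆ J` such that `Bsub j n = Bsub j n₀` for all `j ∈ L`, `n ≥ n₀`. -/
theorem chase_descending_chain {I : Type u} {J : Type u} (hI : ¬ IsOmegaMeasurable I)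
    [Infinite J] (A : I → Type u) (B : J → Type u)
    [∀ i, AddCommGroup (A i)] [∀ j, AddCommGroup (B j)]
    (hcard : ∀ i, Cardinal.mk (A i) < Cardinal.mk J)
    (φ : (∀ i, A i) →+ DirectSum J B)
    (Asub : ∀ i, ℕ → AddSubgroup (A i)) (Bsub : ∀ j, ℕ → AddSubgroup (B j))
    (hA : ∀ i, Antitone (Asub i)) (hB : ∀ j, Antitone (Bsub j))
    (hφ : ∀ (k : ℕ) (x : ∀ i, A i), (∀ i, x i ∈ Asub i k) → ∀ j, φ x j ∈ Bsub j k)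
    (hsurj : Function.Surjective φ)
    (hressurj : ∀ (k : ℕ) (b : DirectSum J B), (∀ j, b j ∈ Bsub j k) →
      ∃ x : ∀ i, A i, (∀ i, x i ∈ Asub i k) ∧ φ x = b) :
    ∃ (n₀ : ℕ) (L : Set J), L.Infinite ∧ ∀ j ∈ L, ∀ n ≥ n₀, Bsub j n = Bsub j n₀ :=
  chase_descending_chain_general hI A B hcard φ Asub Bsub hA hB hφ hressurj
end

section
/- In the setting of the generalized Chase Lemma conclusion: if φ : ∏_{i∈I} A_i → ⊕_{j∈J} B_j is a morphism of a Chase system, I' ⊆ I and J' ⊆ J are finite, n₀ ∈ ℕ, and φ(∏_{i∈I∖I'} A_{i,n₀}) ⊆ (⊕_{j∈J'} B_j) + ⋂_{n∈ℕ}(⊕_{j∈J} B_{j,n}), then in fact φ(∏_{i∈I∖I'} A_{i,n₀}) ⊆ (⊕_{j∈J'} B_{j,n₀}) + ⊕_{j∈J∖J'} (⋂_{n∈ℕ} B_{j,n}). -/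
/-- **Refinement of the conclusion of the generalized Chase Lemma.** If `φ` is the morphism of
a Chase system, `I' ⊆ I`, `J' ⊆ J` are finite, `n₀ : ℕ`, and
`φ (∏_{i ∉ I'} Asub i n₀) ⊆ (⨁_{j ∈ J'} B j) + ⋂ₙ (⨁ⱼ Bsub j n)`, then in fact
`φ (∏_{i ∉ I'} Asub i n₀) ⊆ (⨁_{j ∈ J'} Bsub j n₀) + ⨁_{j ∉ J'} (⋂ₙ Bsub j n)`; elementwise,
for every admissible `x` and every `j`, the component `φ x j` lies in `Bsub j n₀` when
`j ∈ J'` and in `⋂ₙ Bsub j n` when `j ∉ J'`. -/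
theorem chase_refined_inclusion {I J : Type*} (A : I → Type*) (B : J → Type*)
    [∀ i, AddCommGroup (A i)] [∀ j, AddCommGroup (B j)]
    (φ : (∀ i, A i) →+ DirectSum J B)
    (Asub : ∀ i, ℕ → AddSubgroup (A i)) (Bsub : ∀ j, ℕ → AddSubgroup (B j))
    (hA : ∀ i, Antitone (Asub i)) (hB : ∀ j, Antitone (Bsub j))
    (hφ : ∀ (k : ℕ) (x : ∀ i, A i), (∀ i, x i ∈ Asub i k) → ∀ j, φ x j ∈ Bsub j k)
    (I' : Finset I) (J' : Finset J) (n₀ : ℕ)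
    (hincl : ∀ x : ∀ i, A i, (∀ i, i ∉ I' → x i ∈ Asub i n₀) → (∀ i ∈ I', x i = 0) →
      ∃ y z : DirectSum J B, φ x = y + z ∧ (∀ j ∉ J', y j = 0) ∧
        ∀ (n : ℕ) (j : J), z j ∈ Bsub j n) :
    ∀ x : ∀ i, A i, (∀ i, i ∉ I' → x i ∈ Asub i n₀) → (∀ i ∈ I', x i = 0) →
      (∀ j ∈ J', φ x j ∈ Bsub j n₀) ∧ ∀ j ∉ J', ∀ n : ℕ, φ x j ∈ Bsub j n := by
  intro x hx hx0
  have hall : ∀ i, x i ∈ Asub i n₀ := by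
    intro i
    by_cases h : i ∈ I'
    · rw [hx0 i h]; exact (Asub i n₀).zero_mem
    · exact hx i h
  constructor
  · intro j _
    exact hφ n₀ x hall j
  · intro j hj n
    obtain ⟨y, z, hsum, hy, hz⟩ := hincl x hx hx0
    have : φ x j = z j := by
      rw [hsum, DirectSum.add_apply, hy j hj, zero_add]
    rw [this]
    exact hz n j
end

section
/- Let R be a ring and M an R-module. For a homomorphism b : X → Y between R-modules, define Hom(Y,M)b = { f ∈ Hom(X,M) : f = φ ∘ b for some φ ∈ Hom(Y,M) }, a subgroup of Hom(X,M). Then for any family (M_i)_{i∈I} of R-modules there are natural isomorphisms Hom(Y, ∏_{i∈I} M_i)b ≅ ∏_{i∈I} Hom(Y, M_i)b and Hom(Y, ⊕_{i∈I} M_i)b ≅ ⊕_{i∈I} Hom(Y, M_i)b, where in the second statement X and Y are assumed finitely presented. -/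
/-!
Postcomposition with `g : M → N` turns a factorization `f = φ ∘ b` into `g ∘ f = (g ∘ φ) ∘ b`,
so projections, inclusions and components act on subgroups of finite definition, and
factorizations `φᵢ` of the components of a map into `∏ Mᵢ` assemble into `pi φ`. A map from a
finitely generated `X` into `⨁ Mᵢ` has only finitely many nonzero components, so the map
`⨁ Hom(Y, Mᵢ)b → Hom(Y, ⨁ Mᵢ)b` induced by the inclusions is onto; taking components shows
it is injective.
-/

universe u

variable (R : Type u) [Ring R]

/-- The subgroup of finite definition `Hom(Y, M)b` of `Hom(X, M)` associated with
`b : X → Y`: the set of all `f : X → M` that factor as `f = φ ∘ b` with `φ : Y → M`. -/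
def finDefSubgroup {X Y : Type u} [AddCommGroup X] [AddCommGroup Y] [Module R X] [Module R Y]
    (b : X →ₗ[R] Y) (M : Type u) [AddCommGroup M] [Module R M] :
    AddSubgroup (X →ₗ[R] M) where
  carrier := {f | ∃ φ : Y →ₗ[R] M, f = φ.comp b}
  add_mem' := by rintro f g ⟨φ, rfl⟩ ⟨ψ, rfl⟩; exact ⟨φ + ψ, by ext x; simp⟩
  zero_mem' := ⟨0, by ext x; simp⟩
  neg_mem' := by rintro f ⟨φ, rfl⟩; exact ⟨-φ, by ext x; simp⟩

open DirectSum

theorem DirectSum.exists_finset_component_comp_eq_zero {S X I : Type*} [Semiring S]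
    [AddCommMonoid X] [Module S X] [Module.Finite S X] {M : I → Type*}
    [∀ i, AddCommMonoid (M i)] [∀ i, Module S (M i)] (f : X →ₗ[S] ⨁ i, M i) :
    ∃ T : Finset I, ∀ i ∉ T, (component S I M i).comp f = 0 := by
  classical
  obtain ⟨s, hs⟩ := Module.finite_def.mp ‹Module.Finite S X›
  refine ⟨s.biUnion fun x => (f x).support, fun i hi => LinearMap.ext_on hs fun x hx => ?_⟩
  exact DFinsupp.notMem_support_iff.mp fun h => hi (Finset.mem_biUnion.mpr ⟨x, hx, h⟩)

theorem DirectSum.linearMap_ext_component {S X I : Type*} [Semiring S] [AddCommMonoid X]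
    [Module S X] {M : I → Type*} [∀ i, AddCommMonoid (M i)]
    [∀ i, Module S (M i)] {f g : X →ₗ[S] ⨁ i, M i}
    (h : ∀ i, (component S I M i).comp f = (component S I M i).comp g) : f = g :=
  LinearMap.ext fun x => ext_component S fun i => LinearMap.congr_fun (h i) x

namespace finDefSubgroup

section Map

variable {R} {X Y M N : Type u} [AddCommGroup X] [AddCommGroup Y] [Module R X] [Module R Y]
  {b : X →ₗ[R] Y} [AddCommGroup M] [Module R M] [AddCommGroup N] [Module R N]

theorem comp_mem (g : M →ₗ[R] N) {f : X →ₗ[R] M} (hf : f ∈ finDefSubgroup R b M) :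
    g.comp f ∈ finDefSubgroup R b N := by
  obtain ⟨φ, rfl⟩ := hf
  exact ⟨g.comp φ, (LinearMap.comp_assoc b φ g).symm⟩

variable (b) in
def map (g : M →ₗ[R] N) : finDefSubgroup R b M →+ finDefSubgroup R b N where
  toFun f := ⟨g.comp f, comp_mem g f.2⟩
  map_zero' := Subtype.ext (LinearMap.comp_zero g)
  map_add' _ _ := Subtype.ext (LinearMap.comp_add _ _ g)

@[simp]
theorem coe_map (g : M →ₗ[R] N) (f : finDefSubgroup R b M) :
    (map b g f : X →ₗ[R] N) = g.comp (f : X →ₗ[R] M) := rfl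

end Map

section Pi

variable {R} {X Y : Type u} [AddCommGroup X] [AddCommGroup Y] [Module R X] [Module R Y]
  (b : X →ₗ[R] Y) {I : Type u} (M : I → Type u) [∀ i, AddCommGroup (M i)] [∀ i, Module R (M i)]

theorem pi_mem {f : ∀ i, X →ₗ[R] M i} (hf : ∀ i, f i ∈ finDefSubgroup R b (M i)) :
    LinearMap.pi f ∈ finDefSubgroup R b (∀ i, M i) := by
  choose φ hφ using hf
  exact ⟨LinearMap.pi φ, by rw [LinearMap.pi_comp, ← funext hφ]⟩

def piEquiv : finDefSubgroup R b (∀ i, M i) ≃+ ∀ i, finDefSubgroup R b (M i) where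
  toFun f i := map b (LinearMap.proj i) f
  invFun g := ⟨LinearMap.pi fun i => g i, pi_mem b M fun i => (g i).2⟩
  left_inv _ := rfl
  right_inv _ := rfl
  map_add' _ _ := rfl

end Pi

section DirectSum

variable {R} {X Y : Type u} [AddCommGroup X] [AddCommGroup Y] [Module R X] [Module R Y]
  (b : X →ₗ[R] Y) {I : Type u} [DecidableEq I] (M : I → Type u) [∀ i, AddCommGroup (M i)]
  [∀ i, Module R (M i)]

def ofDirectSum : (⨁ i, finDefSubgroup R b (M i)) →+ finDefSubgroup R b (⨁ i, M i) :=
  toAddMonoid fun i => map b (lof R I M i)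

theorem map_component_ofDirectSum (g : ⨁ i, finDefSubgroup R b (M i)) (i : I) :
    map b (component R I M i) (ofDirectSum b M g) = g i := by
  suffices (map b (component R I M i)).comp (ofDirectSum b M) = DFinsupp.evalAddMonoidHom i from
    DFunLike.congr_fun this g
  refine DirectSum.addHom_ext fun j f => ?_
  rw [AddMonoidHom.comp_apply, ofDirectSum, toAddMonoid_of]
  change _ = of (fun i => finDefSubgroup R b (M i)) j f i
  by_cases hj : j = i
  · subst hj
    ext x
    simp
  · rw [of_eq_of_ne _ _ _ (Ne.symm hj)]
    ext x
    simp [component.of, hj]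

theorem ofDirectSum_injective : Function.Injective (ofDirectSum b M) := fun g₁ g₂ h =>
  DFinsupp.ext fun i => by rw [← map_component_ofDirectSum, h, map_component_ofDirectSum]

theorem ofDirectSum_surjective [Module.Finite R X] : Function.Surjective (ofDirectSum b M) := by
  intro f
  obtain ⟨T, hT⟩ := exists_finset_component_comp_eq_zero (f : X →ₗ[R] ⨁ i, M i)
  refine ⟨DFinsupp.mk T fun i => map b (component R I M i) f,
    Subtype.ext (linearMap_ext_component fun i => ?_)⟩
  rw [← coe_map, map_component_ofDirectSum, DFinsupp.mk_apply]
  split_ifs with hi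
  · rfl
  · exact (hT i hi).symm

noncomputable def directSumEquiv [Module.Finite R X] :
    finDefSubgroup R b (⨁ i, M i) ≃+ ⨁ i, finDefSubgroup R b (M i) :=
  (AddEquiv.ofBijective (ofDirectSum b M)
    ⟨ofDirectSum_injective b M, ofDirectSum_surjective b M⟩).symm

theorem coe_directSumEquiv_apply [Module.Finite R X] (f : finDefSubgroup R b (⨁ i, M i))
    (i : I) :
    (directSumEquiv b M f i : X →ₗ[R] M i) = (component R I M i).comp (f : X →ₗ[R] ⨁ i, M i) := by
  have hf : ofDirectSum b M (directSumEquiv b M f) = f := (directSumEquiv b M).symm_apply_apply f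
  rw [← map_component_ofDirectSum, hf, coe_map]

end DirectSum

end finDefSubgroup

/-- Subgroups of finite definition commute with direct products and (for `X`, `Y` finitely
presented) with direct sums: the canonical isomorphisms
`Hom(X, ∏ᵢ Mᵢ) ≅ ∏ᵢ Hom(X, Mᵢ)` and `Hom(X, ⨁ᵢ Mᵢ) ≅ ⨁ᵢ Hom(X, Mᵢ)` restrict to natural
isomorphisms `Hom(Y, ∏ᵢ Mᵢ)b ≅ ∏ᵢ Hom(Y, Mᵢ)b` and `Hom(Y, ⨁ᵢ Mᵢ)b ≅ ⨁ᵢ Hom(Y, Mᵢ)b`. -/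
theorem finDefSubgroup_prod_and_directSum {X Y : Type u} [AddCommGroup X] [AddCommGroup Y]
    [Module R X] [Module R Y] (b : X →ₗ[R] Y)
    {I : Type u} (M : I → Type u) [∀ i, AddCommGroup (M i)] [∀ i, Module R (M i)] :
    (∃ e : finDefSubgroup R b (∀ i, M i) ≃+ ∀ i, finDefSubgroup R b (M i),
      ∀ (f : finDefSubgroup R b (∀ i, M i)) (i : I),
        (e f i : X →ₗ[R] M i) = (LinearMap.proj i).comp (f : X →ₗ[R] ∀ i, M i)) ∧
    (Module.FinitePresentation R X → Module.FinitePresentation R Y →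
      ∃ e : finDefSubgroup R b (DirectSum I M) ≃+ DirectSum I fun i => finDefSubgroup R b (M i),
        ∀ (f : finDefSubgroup R b (DirectSum I M)) (i : I),
          (e f i : X →ₗ[R] M i) =
            (DirectSum.component R I M i).comp (f : X →ₗ[R] DirectSum I M)) := by
  classical
  refine ⟨⟨finDefSubgroup.piEquiv b M, fun _ _ => rfl⟩, fun _ _ => ?_⟩
  exact ⟨finDefSubgroup.directSumEquiv b M, finDefSubgroup.coe_directSumEquiv_apply b M⟩
end
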